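/- Let 0 < θ < 1/3, n ≥ 2, and M(h) = nθ(1−3θ)[‖h‖₄⁴·I + 2‖h‖₄⁴·hhᵀ − 3·diag(h^⊙2)]. Let h₀ ∈ Sⁿ⁻¹ have exactly r nonzero entries, each equal to ±1/√r. If r = 1, then min over unit z ⊥ h₀ of zᵀM(h₀)z = nθ(1−3θ) > 0. If r > 1, then min over unit z ⊥ h₀ of zᵀM(h₀)z = −2nθ(1−3θ)/r < 0; in the case h₀ = (1/√r,…,1/√r,0,…,0), this minimum is attained by the unit tangent vector z with z₁ = (r−1)/√(r(r−1)), z_j = −1/√(r(r−1)) for 2 ≤ j ≤ r, and z_j = 0 for j > r. -/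

import Mathlib

open Matrix MeasureTheory ProbabilityTheory Finset Filter

noncomputable section

/-- The Euclidean (`ℓ²`) norm of a vector in `Fin n → ℝ`. -/
def enorm2 {n : ℕ} (v : Fin n → ℝ) : ℝ := Real.sqrt (∑ j, v j ^ 2)

/-- The spectral norm (ℓ² operator norm) of a square real matrix. -/
def spec {n : ℕ} (A : Matrix (Fin n) (Fin n) ℝ) : ℝ := ‖Matrix.toEuclideanCLM (𝕜 := ℝ) A‖

/-- The Euclidean gradient of `F : ℝⁿ → ℝ`, given by the partial derivatives. -/
def egrad {n : ℕ} (F : (Fin n → ℝ) → ℝ) (h : Fin n → ℝ) : Fin n → ℝ :=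
  fun j => fderiv ℝ F h (Pi.single j 1)

/-- The Euclidean Hessian of `F : ℝⁿ → ℝ`, given by the second partial derivatives. -/
def ehess {n : ℕ} (F : (Fin n → ℝ) → ℝ) (h : Fin n → ℝ) : Matrix (Fin n) (Fin n) ℝ :=
  Matrix.of fun j k => fderiv ℝ (fun v => fderiv ℝ F v (Pi.single j 1)) h (Pi.single k 1)

/-- Projection `P_{h⊥} = I - h hᵀ` onto the tangent space of the unit sphere at `h`. -/
def Pperp {n : ℕ} (h : Fin n → ℝ) : Matrix (Fin n) (Fin n) ℝ := 1 - Matrix.vecMulVec h h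

/-- Riemannian gradient `∇̂F(h) = P_{h⊥} ∇F(h)`. -/
def rgrad {n : ℕ} (F : (Fin n → ℝ) → ℝ) (h : Fin n → ℝ) : Fin n → ℝ :=
  (Pperp h).mulVec (egrad F h)

/-- Riemannian Hessian `ĤF(h) = P_{h⊥} H_F(h) P_{h⊥} - ⟨∇F(h), h⟩ P_{h⊥}`. -/
def rhess {n : ℕ} (F : (Fin n → ℝ) → ℝ) (h : Fin n → ℝ) : Matrix (Fin n) (Fin n) ℝ :=
  Pperp h * ehess F h * Pperp h - (egrad F h ⬝ᵥ h) • Pperp h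

/-- The unit sphere `S^{n-1} ⊆ ℝⁿ`. -/
def usph (n : ℕ) : Set (Fin n → ℝ) := {h | enorm2 h = 1}

/-- The objective `L(h) = -(1/(4N)) ∑_i ‖C_{x_i} U h‖₄⁴`. -/
def Lobj {n N : ℕ} (x : Fin N → Fin n → ℝ) (U : Matrix (Fin n) (Fin n) ℝ)
    (h : Fin n → ℝ) : ℝ :=
  -(1 / (4 * (N : ℝ))) * ∑ i, ∑ j, ((Matrix.circulant (x i) * U).mulVec h j) ^ 4

/-- Manifold gradient descent iterates. -/
def mgdIter {n : ℕ} (F : (Fin n → ℝ) → ℝ) (γ : ℝ) (h0 : Fin n → ℝ) : ℕ → Fin n → ℝ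
  | 0 => h0
  | t + 1 =>
    let w := mgdIter F γ h0 t - γ • rgrad F (mgdIter F γ h0 t)
    (enorm2 w)⁻¹ • w

/-- `h₀` is a stationary point with `r` nonzero entries: each nonzero entry equals `±1/√r`. -/
def IsStatPoint {n : ℕ} (h₀ : Fin n → ℝ) (r : ℕ) : Prop :=
  (∀ j, h₀ j = 0 ∨ h₀ j = 1 / Real.sqrt r ∨ h₀ j = -(1 / Real.sqrt r)) ∧
  (Finset.univ.filter fun j => h₀ j ≠ 0).card = r

/-- `h` is in the `(ρ,r)`-neighborhood of `h₀`. -/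
def nbhd {n : ℕ} (ρ : ℝ) (r : ℕ) (h₀ h : Fin n → ℝ) : Prop :=
  ∀ j, |h j ^ 2 - h₀ j ^ 2| ≤ ρ / r

def H1'' (n : ℕ) (ρ : ℝ) : Set (Fin n → ℝ) :=
  {h | enorm2 h = 1 ∧ ∃ h₀, IsStatPoint h₀ 1 ∧ nbhd ρ 1 h₀ h}

def H2'' (n : ℕ) (ρ : ℝ) : Set (Fin n → ℝ) :=
  {h | enorm2 h = 1 ∧ ∃ r h₀, 1 < r ∧ IsStatPoint h₀ r ∧ nbhd ρ r h₀ h}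

def H3'' (n : ℕ) (ρ : ℝ) : Set (Fin n → ℝ) := usph n \ (H1'' n ρ ∪ H2'' n ρ)

/-- Symmetric positive semidefinite square root (junk value `0` off the PSD cone). -/
def matSqrt {n : ℕ} (Q : Matrix (Fin n) (Fin n) ℝ) : Matrix (Fin n) (Fin n) ℝ :=
  letI := Classical.dec Q.PosSemidef
  if hQ : Q.PosSemidef then
    hQ.1.eigenvectorUnitary.1 * diagonal ((↑) ∘ (√·) ∘ hQ.1.eigenvalues) *
      (star hQ.1.eigenvectorUnitary : Matrix (Fin n) (Fin n) ℝ) else 0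

/-- Inverse of the symmetric positive definite square root. -/
def matInvSqrt {n : ℕ} (Q : Matrix (Fin n) (Fin n) ℝ) : Matrix (Fin n) (Fin n) ℝ :=
  (matSqrt Q)⁻¹

/-- The rotation `(C_fᵀ C_f)^{1/2} C_f⁻¹`. -/
def rotMat {n : ℕ} (f : Fin n → ℝ) : Matrix (Fin n) (Fin n) ℝ :=
  matSqrt ((Matrix.circulant f)ᵀ * Matrix.circulant f) * (Matrix.circulant f)⁻¹

def H1set {n : ℕ} (f : Fin n → ℝ) (ρ : ℝ) : Set (Fin n → ℝ) :=
  (fun h => (rotMat f).mulVec h) '' H1'' n ρ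

def H2set {n : ℕ} (f : Fin n → ℝ) (ρ : ℝ) : Set (Fin n → ℝ) :=
  (fun h => (rotMat f).mulVec h) '' H2'' n ρ

def H3set {n : ℕ} (f : Fin n → ℝ) (ρ : ℝ) : Set (Fin n → ℝ) :=
  (fun h => (rotMat f).mulVec h) '' H3'' n ρ

/-- The `n`-point DFT of a real vector. -/
def dftv {n : ℕ} (f : Fin n → ℝ) : Fin n → ℂ :=
  fun j => ∑ k, (f k : ℂ) *
    Complex.exp (-2 * Real.pi * Complex.I * (j : ℕ) * (k : ℕ) / n)

/-- The inverse `n`-point DFT. -/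
def idftv {n : ℕ} (v : Fin n → ℂ) : Fin n → ℂ :=
  fun k => (n : ℂ)⁻¹ * ∑ j, v j *
    Complex.exp (2 * Real.pi * Complex.I * (j : ℕ) * (k : ℕ) / n)

/-- The condition number `κ = max_j |𝓕f_j| / min_k |𝓕f_k|`. -/
def condNum {n : ℕ} (f : Fin n → ℝ) : ℝ :=
  (⨆ j, ‖dftv f j‖) / (⨅ j, ‖dftv f j‖)

/-- The Bernoulli–Rademacher distribution on ℝ with parameter θ. -/
def bernRad (θ : ℝ) : Measure ℝ :=
  ENNReal.ofReal (θ / 2) • Measure.dirac 1 + ENNReal.ofReal (θ / 2) • Measure.dirac (-1) +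
    ENNReal.ofReal (1 - θ) • Measure.dirac 0

/-- The matrix `(1/(θnN)) ∑ᵢ C_{yᵢ}ᵀ C_{yᵢ}`. -/
def Qmat {n N : ℕ} (θ : ℝ) (y : Fin N → Fin n → ℝ) : Matrix (Fin n) (Fin n) ℝ :=
  (1 / (θ * n * N)) • ∑ i, (Matrix.circulant (y i))ᵀ * Matrix.circulant (y i)

/-- The preconditioner `R = ((1/(θnN)) ∑ᵢ C_{yᵢ}ᵀ C_{yᵢ})^{-1/2}`. -/
def Rmat {n N : ℕ} (θ : ℝ) (y : Fin N → Fin n → ℝ) : Matrix (Fin n) (Fin n) ℝ :=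
  matInvSqrt (Qmat θ y)


/-- `g(h) = nθ(1-3θ)(‖h‖₄⁴ h - h^{⊙3})`, the expected Riemannian gradient. -/
def gvec {n : ℕ} (θ : ℝ) (h : Fin n → ℝ) : Fin n → ℝ :=
  ((n : ℝ) * θ * (1 - 3 * θ)) • ((∑ j, h j ^ 4) • h - fun j => h j ^ 3)

/-- `M(h) = nθ(1-3θ)[‖h‖₄⁴ I + 2‖h‖₄⁴ h hᵀ - 3 diag(h^{⊙2})]`, the expected Riemannian Hessian. -/
def Mmat {n : ℕ} (θ : ℝ) (h : Fin n → ℝ) : Matrix (Fin n) (Fin n) ℝ :=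
  ((n : ℝ) * θ * (1 - 3 * θ)) •
    ((∑ j, h j ^ 4) • (1 : Matrix (Fin n) (Fin n) ℝ) +
      (2 * ∑ j, h j ^ 4) • Matrix.vecMulVec h h -
      (3 : ℝ) • Matrix.diagonal (fun j => h j ^ 2))


lemma dot_vecMulVec' {n : ℕ} (h z : Fin n → ℝ) :
    z ⬝ᵥ (Matrix.vecMulVec h h).mulVec z = (z ⬝ᵥ h) ^ 2 := by
  simp only [dotProduct, mulVec, Matrix.vecMulVec_apply, dotProduct]
  rw [sq]
  simp only [Finset.mul_sum, Finset.sum_mul]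
  congr 1; ext j; congr 1; ext k; ring

lemma dot_diag' {n : ℕ} (d z : Fin n → ℝ) :
    z ⬝ᵥ (Matrix.diagonal d).mulVec z = ∑ j, d j * z j ^ 2 := by
  simp only [dotProduct, Matrix.mulVec_diagonal]
  congr 1; ext j; ring

lemma dot_one' {n : ℕ} (z : Fin n → ℝ) :
    z ⬝ᵥ (1 : Matrix (Fin n) (Fin n) ℝ).mulVec z = ∑ j, z j ^ 2 := by
  rw [Matrix.one_mulVec]; simp [dotProduct, sq]

lemma quad_form {n : ℕ} (θ : ℝ) (h z : Fin n → ℝ) :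
    z ⬝ᵥ (Mmat θ h).mulVec z =
      ((n : ℝ) * θ * (1 - 3 * θ)) * ((∑ j, h j ^ 4) * (∑ j, z j ^ 2)
        + (2 * ∑ j, h j ^ 4) * (z ⬝ᵥ h) ^ 2 - 3 * ∑ j, h j ^ 2 * z j ^ 2) := by
  rw [Mmat, Matrix.smul_mulVec, dotProduct_smul, smul_eq_mul]
  congr 1
  rw [Matrix.sub_mulVec, Matrix.add_mulVec, dotProduct_sub, dotProduct_add,
    Matrix.smul_mulVec, Matrix.smul_mulVec, Matrix.smul_mulVec,
    dotProduct_smul, dotProduct_smul, dotProduct_smul, smul_eq_mul, smul_eq_mul, smul_eq_mul,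
    dot_one', dot_vecMulVec', dot_diag']

lemma stat_sq {n r : ℕ} (hr : 1 ≤ r) {h₀ : Fin n → ℝ} (hstat : IsStatPoint h₀ r) (j : Fin n) :
    h₀ j ^ 2 = if h₀ j ≠ 0 then 1 / (r : ℝ) else 0 := by
  have hrr : ((r : ℝ)) ≠ 0 := by positivity
  have hs : Real.sqrt r ^ 2 = (r : ℝ) := Real.sq_sqrt (by positivity)
  rcases hstat.1 j with h | h | h
  · simp [h]
  · rw [h]; rw [if_pos]
    · rw [div_pow, one_pow, hs]
    · rw [h] at *; intro hc; rw [div_eq_zero_iff] at hc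
      rcases hc with hc | hc
      · exact one_ne_zero hc
      · exact hrr (by rw [← hs, hc]; ring)
  · rw [h]; rw [if_pos]
    · rw [neg_pow, div_pow, one_pow, hs]; ring
    · intro hc
      have : (1 : ℝ) / Real.sqrt r = 0 := by linarith [neg_eq_zero.mp hc]
      rw [div_eq_zero_iff] at this
      rcases this with hc' | hc'
      · exact one_ne_zero hc'
      · exact hrr (by rw [← hs, hc']; ring)

lemma stat_sum4 {n r : ℕ} (hr : 1 ≤ r) {h₀ : Fin n → ℝ} (hstat : IsStatPoint h₀ r) :
    ∑ j, h₀ j ^ 4 = 1 / (r : ℝ) := by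
  have hrr : ((r : ℝ)) ≠ 0 := by positivity
  have : ∀ j, h₀ j ^ 4 = if h₀ j ≠ 0 then (1 / (r : ℝ))^2 else 0 := by
    intro j
    have := stat_sq hr hstat j
    split_ifs with hj
    · rw [show (4:ℕ) = 2*2 from rfl, pow_mul, this, if_pos hj]
    · rw [show (4:ℕ) = 2*2 from rfl, pow_mul, this, if_neg hj, zero_pow]; omega
  rw [Finset.sum_congr rfl (fun j _ => this j), ← Finset.sum_filter, Finset.sum_const,
    hstat.2, nsmul_eq_mul]
  field_simp

lemma sum_pair2 {n : ℕ} {j₁ j₂ : Fin n} (hne : j₁ ≠ j₂) (a b : ℝ) :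
    ∑ j, (if j = j₁ then a else if j = j₂ then b else 0) = a + b := by
  have : ∀ j : Fin n, (if j = j₁ then a else if j = j₂ then b else 0) =
      (if j = j₁ then a else 0) + (if j = j₂ then b else 0) := by
    intro j
    rcases eq_or_ne j j₁ with h | h
    · subst h; rw [if_pos rfl, if_pos rfl, if_neg hne, add_zero]
    · rw [if_neg h, if_neg h, zero_add]
  rw [Finset.sum_congr rfl (fun j _ => this j), Finset.sum_add_distrib,
    Finset.sum_ite_eq' Finset.univ j₁ (fun _ => a), Finset.sum_ite_eq' Finset.univ j₂ (fun _ => b)]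
  simp

lemma sum_head {n r : ℕ} (hrn : r ≤ n) (hr : 1 ≤ r) (A B : ℝ) :
    ∑ j : Fin n, (if (j : ℕ) = 0 then A else if (j : ℕ) < r then B else 0)
      = A + ((r : ℝ) - 1) * B := by
  rw [Fin.sum_univ_eq_sum_range (fun i => if i = 0 then A else if i < r then B else 0) n]
  rw [← Finset.sum_subset (Finset.range_subset_range.mpr hrn) (fun x _ hx => by
    rw [Finset.mem_range, not_lt] at hx
    rw [if_neg (by omega), if_neg (by omega)])]
  obtain ⟨m, rfl⟩ : ∃ m, r = m + 1 := ⟨r - 1, by omega⟩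
  rw [Finset.sum_range_succ']
  rw [if_pos rfl]
  have : ∀ i ∈ Finset.range m, (if i + 1 = 0 then A else if i + 1 < m + 1 then B else 0) = B := by
    intro i hi
    rw [Finset.mem_range] at hi
    rw [if_neg (by omega), if_pos (by omega)]
  rw [Finset.sum_congr rfl this, Finset.sum_const, nsmul_eq_mul, Finset.card_range]
  push_cast
  ring

lemma sum_sq_of_enorm2 {n : ℕ} {z : Fin n → ℝ} (hz : enorm2 z = 1) : ∑ j, z j ^ 2 = 1 := by
  rw [enorm2, Real.sqrt_eq_one] at hz
  exact hz

lemma S_le {n r : ℕ} (hr : 1 ≤ r) {h₀ : Fin n → ℝ} (hstat : IsStatPoint h₀ r)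
    {z : Fin n → ℝ} (hz : ∑ j, z j ^ 2 = 1) :
    ∑ j, h₀ j ^ 2 * z j ^ 2 ≤ 1 / (r : ℝ) := by
  have h1 : ∑ j, h₀ j ^ 2 * z j ^ 2 ≤ ∑ j, (1 / (r : ℝ)) * z j ^ 2 := by
    apply Finset.sum_le_sum
    intro j _
    apply mul_le_mul_of_nonneg_right _ (sq_nonneg _)
    rw [stat_sq hr hstat j]
    split_ifs
    · exact le_rfl
    · positivity
  have h2 : ∑ j, (1 / (r : ℝ)) * z j ^ 2 = 1 / (r : ℝ) := by
    rw [← Finset.mul_sum, hz, mul_one]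
  linarith

lemma S_nonneg {n : ℕ} (h₀ z : Fin n → ℝ) : 0 ≤ ∑ j, h₀ j ^ 2 * z j ^ 2 := by positivity

lemma third_aux {n r : ℕ} (θ : ℝ) (hrn : r ≤ n) (hr1 : 1 < r) {h₀ : Fin n → ℝ}
    (hstat : IsStatPoint h₀ r)
    (hform : ∀ j : Fin n, h₀ j = if (j : ℕ) < r then 1 / Real.sqrt r else 0) :
    enorm2 (fun j : Fin n =>
        if (j : ℕ) = 0 then ((r : ℝ) - 1) / Real.sqrt ((r : ℝ) * ((r : ℝ) - 1))
        else if (j : ℕ) < r then -(1 / Real.sqrt ((r : ℝ) * ((r : ℝ) - 1))) else 0) = 1 ∧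
    (fun j : Fin n =>
        if (j : ℕ) = 0 then ((r : ℝ) - 1) / Real.sqrt ((r : ℝ) * ((r : ℝ) - 1))
        else if (j : ℕ) < r then -(1 / Real.sqrt ((r : ℝ) * ((r : ℝ) - 1))) else 0) ⬝ᵥ h₀ = 0 ∧
    (fun j : Fin n =>
        if (j : ℕ) = 0 then ((r : ℝ) - 1) / Real.sqrt ((r : ℝ) * ((r : ℝ) - 1))
        else if (j : ℕ) < r then -(1 / Real.sqrt ((r : ℝ) * ((r : ℝ) - 1))) else 0) ⬝ᵥ
      (Mmat θ h₀).mulVec (fun j : Fin n =>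
        if (j : ℕ) = 0 then ((r : ℝ) - 1) / Real.sqrt ((r : ℝ) * ((r : ℝ) - 1))
        else if (j : ℕ) < r then -(1 / Real.sqrt ((r : ℝ) * ((r : ℝ) - 1))) else 0) =
      -(2 * (n : ℝ) * θ * (1 - 3 * θ)) / r := by
  set R : ℝ := (r : ℝ) with hRdef
  have hR : (2 : ℝ) ≤ R := by rw [hRdef]; exact_mod_cast hr1
  set t : ℝ := Real.sqrt (R * (R - 1)) with htdef
  have ht2 : t ^ 2 = R * (R - 1) := Real.sq_sqrt (by nlinarith)
  have ht0 : t ≠ 0 := by intro hc; rw [hc] at ht2; nlinarith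
  set s : ℝ := Real.sqrt R with hsdef
  have hs2 : s ^ 2 = R := Real.sq_sqrt (by linarith)
  have hs0 : s ≠ 0 := by intro hc; rw [hc] at hs2; nlinarith
  set Z : Fin n → ℝ := fun j : Fin n =>
    if (j : ℕ) = 0 then (R - 1) / t else if (j : ℕ) < r then -(1 / t) else 0 with hZdef
  have hinner : ((R - 1) / t) ^ 2 + (R - 1) * (-(1 / t)) ^ 2 = 1 := by
    have e : ((R - 1) / t) ^ 2 + (R - 1) * (-(1 / t)) ^ 2 =
        ((R - 1) ^ 2 + (R - 1)) / t ^ 2 := by ring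
    rw [e, ht2, div_eq_one_iff_eq (by nlinarith)]
    ring
  have hz2 : ∑ j, Z j ^ 2 = 1 := by
    have e1 : ∀ j : Fin n, Z j ^ 2 =
        (if (j : ℕ) = 0 then ((R - 1) / t) ^ 2
         else if (j : ℕ) < r then (-(1 / t)) ^ 2 else 0) := by
      intro j; rw [hZdef]; dsimp only; split_ifs <;> ring
    rw [Finset.sum_congr rfl (fun j _ => e1 j), sum_head hrn (le_of_lt hr1)]
    exact hinner
  have hdot : Z ⬝ᵥ h₀ = 0 := by
    have e2 : ∀ j : Fin n, Z j * h₀ j =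
        (if (j : ℕ) = 0 then ((R - 1) / t) * (1 / s)
         else if (j : ℕ) < r then (-(1 / t)) * (1 / s) else 0) := by
      intro j; rw [hform j, hZdef]; dsimp only
      split_ifs <;> first | (exfalso; omega) | ring
    rw [dotProduct, Finset.sum_congr rfl (fun j _ => e2 j), sum_head hrn (le_of_lt hr1)]
    ring
  have hS : ∑ j, h₀ j ^ 2 * Z j ^ 2 = 1 / R := by
    have e3 : ∀ j : Fin n, h₀ j ^ 2 * Z j ^ 2 =
        (if (j : ℕ) = 0 then (1 / s) ^ 2 * ((R - 1) / t) ^ 2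
         else if (j : ℕ) < r then (1 / s) ^ 2 * (-(1 / t)) ^ 2 else 0) := by
      intro j; rw [hform j, hZdef]; dsimp only
      split_ifs <;> first | (exfalso; omega) | ring
    rw [Finset.sum_congr rfl (fun j _ => e3 j), sum_head hrn (le_of_lt hr1)]
    have e : (1 / s) ^ 2 * ((R - 1) / t) ^ 2 + (R - 1) * ((1 / s) ^ 2 * (-(1 / t)) ^ 2) =
        (1 / s) ^ 2 * (((R - 1) / t) ^ 2 + (R - 1) * (-(1 / t)) ^ 2) := by ring
    rw [e, hinner, mul_one, div_pow, one_pow, hs2]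
  refine ⟨?_, hdot, ?_⟩
  · rw [enorm2, hz2, Real.sqrt_one]
  · rw [quad_form, stat_sum4 (le_of_lt hr1) hstat, hz2, hdot, hS]
    have hR0 : R ≠ 0 := by linarith
    field_simp
    ring


lemma bound_aux (c Rr S : ℝ) (hc : 0 < c) (hR : 0 < Rr) (hS : S ≤ 1 / Rr) :
    -(2 * c) / Rr ≤ c * (1 / Rr * 1 + 2 * (1 / Rr) * 0 ^ 2 - 3 * S) := by
  rw [div_le_iff₀ hR]
  have e : (1 / Rr) * Rr = 1 := by field_simp
  have h2 : c * S * Rr ≤ c * (1 / Rr) * Rr := by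
    apply mul_le_mul_of_nonneg_right _ hR.le
    exact mul_le_mul_of_nonneg_left hS hc.le
  nlinarith [e, h2]


/-- The minimal Riemannian curvature of the expected objective at stationary points. -/
theorem stmt17 {n : ℕ} (hn : 2 ≤ n) (θ : ℝ) (hθ1 : 0 < θ) (hθ2 : θ < 1 / 3)
    (r : ℕ) (hr : 1 ≤ r) (h₀ : Fin n → ℝ) (hstat : IsStatPoint h₀ r) :
    (r = 1 →
      (0 : ℝ) < (n : ℝ) * θ * (1 - 3 * θ) ∧
      (∀ z : Fin n → ℝ, enorm2 z = 1 → z ⬝ᵥ h₀ = 0 →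
        (n : ℝ) * θ * (1 - 3 * θ) ≤ z ⬝ᵥ (Mmat θ h₀).mulVec z) ∧
      (∃ z : Fin n → ℝ, enorm2 z = 1 ∧ z ⬝ᵥ h₀ = 0 ∧
        z ⬝ᵥ (Mmat θ h₀).mulVec z = (n : ℝ) * θ * (1 - 3 * θ))) ∧
    (1 < r →
      -(2 * (n : ℝ) * θ * (1 - 3 * θ)) / r < 0 ∧
      (∀ z : Fin n → ℝ, enorm2 z = 1 → z ⬝ᵥ h₀ = 0 →
        -(2 * (n : ℝ) * θ * (1 - 3 * θ)) / r ≤ z ⬝ᵥ (Mmat θ h₀).mulVec z) ∧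
      (∃ z : Fin n → ℝ, enorm2 z = 1 ∧ z ⬝ᵥ h₀ = 0 ∧
        z ⬝ᵥ (Mmat θ h₀).mulVec z = -(2 * (n : ℝ) * θ * (1 - 3 * θ)) / r)) ∧
    (1 < r → (∀ j : Fin n, h₀ j = if (j : ℕ) < r then 1 / Real.sqrt r else 0) →
      let z : Fin n → ℝ := fun j =>
        if (j : ℕ) = 0 then ((r : ℝ) - 1) / Real.sqrt ((r : ℝ) * ((r : ℝ) - 1))
        else if (j : ℕ) < r then -(1 / Real.sqrt ((r : ℝ) * ((r : ℝ) - 1))) else 0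
      enorm2 z = 1 ∧ z ⬝ᵥ h₀ = 0 ∧
        z ⬝ᵥ (Mmat θ h₀).mulVec z = -(2 * (n : ℝ) * θ * (1 - 3 * θ)) / r) := by
  have hn0 : (0 : ℝ) < (n : ℝ) := by
    have : 0 < n := by omega
    exact_mod_cast this
  have hc : (0 : ℝ) < (n : ℝ) * θ * (1 - 3 * θ) := by
    apply mul_pos (mul_pos hn0 hθ1); linarith
  have hr0 : (0 : ℝ) < (r : ℝ) := by
    have : 0 < r := hr
    exact_mod_cast this
  have hrne : ((r : ℝ)) ≠ 0 := ne_of_gt hr0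
  refine ⟨?_, ?_, ?_⟩
  · -- r = 1
    intro hr1
    subst hr1
    obtain ⟨j₀, hset⟩ := Finset.card_eq_one.mp hstat.2
    have hzero : ∀ j, j ≠ j₀ → h₀ j = 0 := by
      intro j hj
      by_contra hcon
      have : j ∈ Finset.univ.filter fun j => h₀ j ≠ 0 :=
        Finset.mem_filter.mpr ⟨Finset.mem_univ j, hcon⟩
      rw [hset, Finset.mem_singleton] at this
      exact hj this
    have hj₀ : h₀ j₀ ≠ 0 := by
      have : j₀ ∈ Finset.univ.filter fun j => h₀ j ≠ 0 := by
        rw [hset]; exact Finset.mem_singleton_self j₀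
      exact (Finset.mem_filter.mp this).2
    have hSz : ∀ z : Fin n → ℝ, z ⬝ᵥ h₀ = 0 → (∑ j, h₀ j ^ 2 * z j ^ 2) = 0 := by
      intro z horth
      have hdot : z ⬝ᵥ h₀ = z j₀ * h₀ j₀ := by
        rw [dotProduct]
        exact Finset.sum_eq_single j₀ (fun j _ hj => by rw [hzero j hj, mul_zero])
          (fun hcon => absurd (Finset.mem_univ j₀) hcon)
      have hzj₀ : z j₀ = 0 := by
        rw [hdot] at horth
        rcases mul_eq_zero.mp horth with h | h
        · exact h
        · exact absurd h hj₀
      apply Finset.sum_eq_zero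
      intro j _
      rcases eq_or_ne j j₀ with h | h
      · subst h; rw [hzj₀]; ring
      · rw [hzero j h]; ring
    refine ⟨hc, ?_, ?_⟩
    · intro z hz horth
      rw [quad_form, stat_sum4 le_rfl hstat, sum_sq_of_enorm2 hz, horth, hSz z horth]
      norm_num
    · have hcard : 1 < Fintype.card (Fin n) := by rw [Fintype.card_fin]; omega
      obtain ⟨k, hk⟩ := Fintype.exists_ne_of_one_lt_card hcard j₀
      have hk0 : h₀ k = 0 := hzero k hk
      set Z : Fin n → ℝ := Pi.single k (1 : ℝ) with hZdef
      have hz2 : ∑ j, Z j ^ 2 = 1 := by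
        have e : ∀ j : Fin n, Z j ^ 2 = if j = k then 1 else 0 := by
          intro j; rw [hZdef, Pi.single_apply]; split_ifs <;> norm_num
        rw [Finset.sum_congr rfl (fun j _ => e j), Finset.sum_ite_eq' Finset.univ k]
        simp
      have hdot : Z ⬝ᵥ h₀ = 0 := by
        rw [dotProduct]
        apply Finset.sum_eq_zero
        intro j _
        rw [hZdef, Pi.single_apply]
        split_ifs with h
        · subst h; rw [one_mul, hk0]
        · rw [zero_mul]
      refine ⟨Z, ?_, hdot, ?_⟩
      · rw [enorm2, hz2, Real.sqrt_one]
      · rw [quad_form, stat_sum4 le_rfl hstat, hz2, hdot, hSz _ hdot]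
        norm_num
  · -- 1 < r
    intro hr1
    refine ⟨?_, ?_, ?_⟩
    · apply div_neg_of_neg_of_pos _ hr0
      nlinarith
    · intro z hz horth
      rw [quad_form, stat_sum4 hr hstat, sum_sq_of_enorm2 hz, horth]
      have hSle := S_le hr hstat (sum_sq_of_enorm2 hz)
      have key := bound_aux ((n : ℝ) * θ * (1 - 3 * θ)) (r : ℝ) _ hc hr0 hSle
      have e : -(2 * (n : ℝ) * θ * (1 - 3 * θ)) / (r : ℝ) =
          -(2 * ((n : ℝ) * θ * (1 - 3 * θ))) / (r : ℝ) := by ring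
      rw [e]
      exact key
    · have hcard : 1 < (Finset.univ.filter fun j => h₀ j ≠ 0).card := by
        rw [hstat.2]; exact hr1
      obtain ⟨j₁, hj₁m, j₂, hj₂m, hne⟩ := Finset.one_lt_card.mp hcard
      have hj₁ : h₀ j₁ ≠ 0 := (Finset.mem_filter.mp hj₁m).2
      have hj₂ : h₀ j₂ ≠ 0 := (Finset.mem_filter.mp hj₂m).2
      have sq1 : h₀ j₁ ^ 2 = 1 / (r : ℝ) := by rw [stat_sq hr hstat, if_pos hj₁]
      have sq2 : h₀ j₂ ^ 2 = 1 / (r : ℝ) := by rw [stat_sq hr hstat, if_pos hj₂]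
      have hs2 : Real.sqrt 2 ^ 2 = 2 := Real.sq_sqrt (by norm_num)
      have hsr : Real.sqrt r ^ 2 = (r : ℝ) := Real.sq_sqrt (by positivity)
      have ha2 : (Real.sqrt r * h₀ j₁ / Real.sqrt 2) ^ 2 = 1 / 2 := by
        rw [div_pow, mul_pow, hsr, sq1, hs2]
        field_simp
      have hb2 : (-(Real.sqrt r * h₀ j₂ / Real.sqrt 2)) ^ 2 = 1 / 2 := by
        rw [neg_sq, div_pow, mul_pow, hsr, sq2, hs2]
        field_simp
      set Z : Fin n → ℝ := fun j => if j = j₁ then Real.sqrt r * h₀ j₁ / Real.sqrt 2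
        else if j = j₂ then -(Real.sqrt r * h₀ j₂ / Real.sqrt 2) else 0 with hZdef
      have hz2 : ∑ j, Z j ^ 2 = 1 := by
        have e : ∀ j : Fin n, Z j ^ 2 =
            (if j = j₁ then (Real.sqrt r * h₀ j₁ / Real.sqrt 2) ^ 2
             else if j = j₂ then (-(Real.sqrt r * h₀ j₂ / Real.sqrt 2)) ^ 2 else 0) := by
          intro j; rw [hZdef]; dsimp only; split_ifs <;> ring
        rw [Finset.sum_congr rfl (fun j _ => e j), sum_pair2 hne, ha2, hb2]
        norm_num
      have hdot : Z ⬝ᵥ h₀ = 0 := by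
        rw [dotProduct]
        have e : ∀ j : Fin n, Z j * h₀ j =
            (if j = j₁ then Real.sqrt r * h₀ j₁ / Real.sqrt 2 * h₀ j₁
             else if j = j₂ then -(Real.sqrt r * h₀ j₂ / Real.sqrt 2) * h₀ j₂ else 0) := by
          intro j
          rw [hZdef]; dsimp only
          rcases eq_or_ne j j₁ with h | h
          · subst h; rw [if_pos rfl, if_pos rfl]
          · rw [if_neg h, if_neg h]
            rcases eq_or_ne j j₂ with h' | h'
            · subst h'; rw [if_pos rfl, if_pos rfl]
            · rw [if_neg h', if_neg h', zero_mul]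
        rw [Finset.sum_congr rfl (fun j _ => e j), sum_pair2 hne]
        have e2 : Real.sqrt r * h₀ j₁ / Real.sqrt 2 * h₀ j₁ +
            -(Real.sqrt r * h₀ j₂ / Real.sqrt 2) * h₀ j₂ =
            Real.sqrt r / Real.sqrt 2 * (h₀ j₁ ^ 2 - h₀ j₂ ^ 2) := by ring
        rw [e2, sq1, sq2]
        ring
      have hS : ∑ j, h₀ j ^ 2 * Z j ^ 2 = 1 / (r : ℝ) := by
        have e : ∀ j : Fin n, h₀ j ^ 2 * Z j ^ 2 =
            (if j = j₁ then h₀ j₁ ^ 2 * (Real.sqrt r * h₀ j₁ / Real.sqrt 2) ^ 2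
             else if j = j₂ then h₀ j₂ ^ 2 * (-(Real.sqrt r * h₀ j₂ / Real.sqrt 2)) ^ 2
             else 0) := by
          intro j
          rw [hZdef]; dsimp only
          rcases eq_or_ne j j₁ with h | h
          · subst h; rw [if_pos rfl, if_pos rfl]
          · rw [if_neg h, if_neg h]
            rcases eq_or_ne j j₂ with h' | h'
            · subst h'; rw [if_pos rfl, if_pos rfl]
            · rw [if_neg h', if_neg h']; ring
        rw [Finset.sum_congr rfl (fun j _ => e j), sum_pair2 hne, ha2, hb2, sq1, sq2]
        ring
      refine ⟨Z, ?_, hdot, ?_⟩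
      · rw [enorm2, hz2, Real.sqrt_one]
      · rw [quad_form, stat_sum4 hr hstat, hz2, hdot, hS]
        field_simp
        ring
  · -- explicit witness
    intro hr1 hform
    have hrn : r ≤ n := by
      have h1 := Finset.card_filter_le Finset.univ (fun j : Fin n => h₀ j ≠ 0)
      rw [hstat.2, Finset.card_univ, Fintype.card_fin] at h1
      exact h1
    exact third_aux θ hrn hr1 hstat hform
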